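/- For every real p with 0 < p < 1, one has (ln p)·(ln(1 - p)) ≤ (ln 2)², and equality holds if and only if p = 1/2. -/

import Mathlib

/-!
Substituting `p = 1 / (1 + exp s)` turns `-log p` and `-log (1 - p)` into `softplus s` and
`softplus (-s)`, where `softplus s = log (1 + exp s)`. The function `log ∘ softplus` is strictly
concave: its derivative at `s` is `(1 - exp (-t)) / t` with `t = softplus s`, a secant slope of the
convex function `exp`, hence decreasing in `t`, and `t` increases with `s`. So for `s ≠ 0`,
`log (softplus s) + log (softplus (-s)) < 2 log (softplus 0) = 2 log (log 2)`.
-/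

open Real Set

noncomputable def softplus (s : ℝ) : ℝ := log (1 + exp s)

lemma softplus_pos (s : ℝ) : 0 < softplus s :=
  log_pos (lt_add_of_pos_right 1 (exp_pos s))

lemma softplus_strictMono : StrictMono softplus := fun _ _ hab =>
  log_lt_log (by positivity) (by simpa using hab)

lemma exp_neg_softplus (s : ℝ) : exp (-softplus s) = (1 + exp s)⁻¹ := by
  rw [exp_neg, softplus, exp_log (by positivity)]

lemma hasDerivAt_softplus (s : ℝ) : HasDerivAt softplus (exp s / (1 + exp s)) s :=
  (((hasDerivAt_exp s).const_add 1).log (by positivity)).congr_deriv (by simp)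

lemma deriv_log_softplus (s : ℝ) :
    deriv (fun s => log (softplus s)) s = (exp (-softplus s) - 1) / -softplus s := by
  rw [((hasDerivAt_softplus s).log (softplus_pos s).ne').deriv, exp_neg_softplus]
  have := softplus_pos s
  field_simp
  ring

lemma strictAnti_deriv_log_softplus : StrictAnti (deriv fun s => log (softplus s)) := by
  intro a b hab
  have hlt : -softplus b < -softplus a := neg_lt_neg (softplus_strictMono hab)
  simpa [deriv_log_softplus] using
    strictConvexOn_exp.secant_strict_mono (mem_univ 0) (mem_univ _) (mem_univ _)
      (neg_ne_zero.2 (softplus_pos b).ne') (neg_ne_zero.2 (softplus_pos a).ne') hlt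

lemma strictConcaveOn_log_softplus : StrictConcaveOn ℝ univ fun s => log (softplus s) :=
  strictAnti_deriv_log_softplus.strictConcaveOn_univ_of_deriv
    (Differentiable.continuous fun s =>
      ((hasDerivAt_softplus s).log (softplus_pos s).ne').differentiableAt)

lemma softplus_mul_softplus_neg_lt {s : ℝ} (hs : s ≠ 0) :
    softplus s * softplus (-s) < log 2 ^ 2 := by
  have hconc := strictConcaveOn_log_softplus.2 (mem_univ s) (mem_univ (-s))
    (by contrapose! hs; linarith) one_half_pos one_half_pos (add_halves 1)
  have hmid : (1 / 2 : ℝ) • s + (1 / 2 : ℝ) • -s = 0 := by simp only [smul_eq_mul]; ring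
  have hsoftplus_zero : softplus 0 = log 2 := by norm_num [softplus, one_add_one_eq_two]
  simp only [smul_eq_mul] at hconc hmid
  rw [hmid, hsoftplus_zero] at hconc
  have hpos := mul_pos (softplus_pos s) (softplus_pos (-s))
  rw [← log_lt_log_iff hpos (by positivity), log_mul (softplus_pos s).ne' (softplus_pos (-s)).ne',
    log_pow]
  push_cast
  linarith

lemma softplus_log_one_sub_div {p : ℝ} (hp0 : 0 < p) (hp1 : p < 1) :
    softplus (log ((1 - p) / p)) = -log p := by
  have h1p : 0 < 1 - p := sub_pos.2 hp1
  rw [softplus, exp_log (div_pos h1p hp0), ← log_inv]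
  congr 1
  field_simp
  ring

lemma log_mul_log_one_sub_lt {p : ℝ} (hp0 : 0 < p) (hp1 : p < 1) (hp : p ≠ 1 / 2) :
    log p * log (1 - p) < log 2 ^ 2 := by
  have h1p : 0 < 1 - p := sub_pos.2 hp1
  set s := log ((1 - p) / p)
  have hs : s ≠ 0 := by
    refine log_ne_zero_of_pos_of_ne_one (div_pos h1p hp0) fun h => hp ?_
    rw [div_eq_one_iff_eq hp0.ne'] at h
    linarith
  have hneg : -s = log ((1 - (1 - p)) / (1 - p)) := by
    rw [← log_inv, inv_div, sub_sub_cancel]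
  have := softplus_mul_softplus_neg_lt hs
  rwa [hneg, softplus_log_one_sub_div h1p (by linarith), softplus_log_one_sub_div hp0 hp1,
    neg_mul_neg] at this

/-- For every real `p` with `0 < p < 1`, `(ln p)·(ln (1 - p)) ≤ (ln 2)²`,
with equality if and only if `p = 1/2`. -/
theorem bloom_log_mul_log_le (p : ℝ) (hp0 : 0 < p) (hp1 : p < 1) :
    Real.log p * Real.log (1 - p) ≤ (Real.log 2) ^ 2 ∧
      (Real.log p * Real.log (1 - p) = (Real.log 2) ^ 2 ↔ p = 1 / 2) := by
  have hhalf : Real.log (1 / 2) * Real.log (1 - 1 / 2) = Real.log 2 ^ 2 := by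
    rw [show (1 : ℝ) - 1 / 2 = 2⁻¹ by norm_num, one_div, log_inv]
    ring
  rcases eq_or_ne p (1 / 2) with rfl | hp
  · exact ⟨hhalf.le, iff_of_true hhalf rfl⟩
  · have hlt := log_mul_log_one_sub_lt hp0 hp1 hp
    exact ⟨hlt.le, iff_of_false hlt.ne hp⟩
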